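/- arXiv:1712.02023 — 2 statements merged into one kernel-verified Lean document; each statement's English description precedes it below -/
import Mathlib

section
/- Let U be a unital of order n ≥ 2 with incidence graph G_U. Then either m(U) > ⌊c(n)⌋, or m(U) ≤ n³ + 1 − (n²(n² + 1)/2)·i(G_U). -/
open Finset

/-- A 2-(v,k,λ) design with `b` blocks and `r` blocks through each point:
points form a finset `points` of size `v`, blocks a finset `blocks` of
`k`-element subsets of `points`, every pair of distinct points lying in
exactly `lam` blocks, where `v > k > lam ≥ 1`. -/
structure TwoDesign (α : Type*) [DecidableEq α] where
  v : ℕ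
  b : ℕ
  r : ℕ
  k : ℕ
  lam : ℕ
  points : Finset α
  blocks : Finset (Finset α)
  lam_pos : 0 < lam
  lam_lt_k : lam < k
  k_lt_v : k < v
  card_points : points.card = v
  card_blocks : blocks.card = b
  block_subset : ∀ B ∈ blocks, B ⊆ points
  card_block : ∀ B ∈ blocks, B.card = k
  pair_count : ∀ p ∈ points, ∀ q ∈ points, p ≠ q →
    (blocks.filter fun B => p ∈ B ∧ q ∈ B).card = lam
  point_count : ∀ p ∈ points, (blocks.filter fun B => p ∈ B).card = r

variable {α : Type*} [DecidableEq α]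

/-- In the incidence graph, the neighbourhood of a set `X` of points:
the blocks containing at least one point of `X`. -/
def TwoDesign.blockNbhd (D : TwoDesign α) (X : Finset α) : Finset (Finset α) :=
  D.blocks.filter fun B => ∃ p ∈ X, p ∈ B

/-- In the incidence graph, the neighbourhood of a set `Y` of blocks:
the points lying on at least one block of `Y`. -/
def TwoDesign.pointNbhd (D : TwoDesign α) (Y : Finset (Finset α)) : Finset α :=
  D.points.filter fun p => ∃ B ∈ Y, p ∈ B

/-- A unital of order `n`: a 2-(n³+1, n+1, 1) design; it has
`n⁴ - n³ + n²` blocks and `n²` blocks through each point. -/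
def TwoDesign.IsUnital (D : TwoDesign α) (n : ℕ) : Prop :=
  D.v = n ^ 3 + 1 ∧ D.b = n ^ 4 - n ^ 3 + n ^ 2 ∧ D.r = n ^ 2 ∧
    D.k = n + 1 ∧ D.lam = 1

/-- `c(n) = n² - (√(8n²+9) - 3)/2`. -/
noncomputable def cFun (n : ℕ) : ℝ :=
  (n : ℝ) ^ 2 - (Real.sqrt (8 * (n : ℝ) ^ 2 + 9) - 3) / 2

/-- The vertex-isoperimetric number of the incidence graph of `D`:
a subset `S` of the vertex set `P ∪ 𝓑` is encoded as the pair
`(X, Y) = (S ∩ P, S ∩ 𝓑)`; then `|S| = |X| + |Y|` and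
`|N(S)| = |N(Y) \ X| + |N(X) \ Y|`. -/
noncomputable def isoInc (D : TwoDesign α) : ℝ :=
  sInf { t : ℝ | ∃ X ⊆ D.points, ∃ Y ⊆ D.blocks,
    0 < X.card + Y.card ∧ 2 * (X.card + Y.card) ≤ D.v + D.b ∧
    t = (((D.pointNbhd Y \ X).card + (D.blockNbhd X \ Y).card : ℕ) : ℝ) /
        ((X.card + Y.card : ℕ) : ℝ) }

/-- In the non-incidence graph, the neighbourhood of a set `X` of points:
the blocks missing at least one point of `X`. -/
def TwoDesign.blockNbhdC (D : TwoDesign α) (X : Finset α) : Finset (Finset α) :=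
  D.blocks.filter fun B => ∃ p ∈ X, p ∉ B

/-- In the non-incidence graph, the neighbourhood of a set `Y` of blocks:
the points missed by at least one block of `Y`. -/
def TwoDesign.pointNbhdC (D : TwoDesign α) (Y : Finset (Finset α)) : Finset α :=
  D.points.filter fun p => ∃ B ∈ Y, p ∉ B

/-- The vertex-isoperimetric number of the non-incidence graph of `D`. -/
noncomputable def isoNonInc (D : TwoDesign α) : ℝ :=
  sInf { t : ℝ | ∃ X ⊆ D.points, ∃ Y ⊆ D.blocks,
    0 < X.card + Y.card ∧ 2 * (X.card + Y.card) ≤ D.v + D.b ∧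
    t = (((D.pointNbhdC Y \ X).card + (D.blockNbhdC X \ Y).card : ℕ) : ℝ) /
        ((X.card + Y.card : ℕ) : ℝ) }

/-- An arc of a design: a set of at least 3 points, no three collinear. -/
def TwoDesign.IsArc (D : TwoDesign α) (X : Finset α) : Prop :=
  X ⊆ D.points ∧ 3 ≤ X.card ∧ ∀ B ∈ D.blocks, (B ∩ X).card ≤ 2

/-- `m(U)`: the maximum size of an arc in the design. -/
noncomputable def maxArc (D : TwoDesign α) : ℕ :=
  sSup { k : ℕ | ∃ X : Finset α, D.IsArc X ∧ X.card = k }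

lemma arcSet_bddAbove (D : TwoDesign α) :
    BddAbove {k : ℕ | ∃ X : Finset α, D.IsArc X ∧ X.card = k} := by
  refine ⟨D.points.card, ?_⟩
  rintro k ⟨X, ⟨hXP, -, -⟩, rfl⟩
  exact Finset.card_le_card hXP

lemma exists_arc3 (n : ℕ) (hn : 2 ≤ n) (D : TwoDesign α) (hU : D.IsUnital n) :
    ∃ X : Finset α, D.IsArc X ∧ X.card = 3 := by
  obtain ⟨hv, hb, hr, hk, hlam⟩ := hU
  have hbpos : 0 < D.blocks.card := by
    rw [D.card_blocks, hb]
    have : 0 < n ^ 2 := by positivity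
    omega
  obtain ⟨B, hB⟩ := Finset.card_pos.mp hbpos
  have hBcard : B.card = n + 1 := by rw [D.card_block B hB, hk]
  have h2B : 1 < B.card := by omega
  obtain ⟨p, hp, q, hq, hpq⟩ := Finset.one_lt_card.mp h2B
  have hBpts : B ⊆ D.points := D.block_subset B hB
  have hsd : 0 < (D.points \ B).card := by
    rw [Finset.card_sdiff_of_subset hBpts, D.card_points, hv, hBcard]
    have h1 : n + 1 < n ^ 3 + 1 := by nlinarith
    omega
  obtain ⟨r, hr'⟩ := Finset.card_pos.mp hsd
  rw [Finset.mem_sdiff] at hr'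
  obtain ⟨hrpts, hrB⟩ := hr'
  have hrp : r ≠ p := fun h => hrB (h ▸ hp)
  have hrq : r ≠ q := fun h => hrB (h ▸ hq)
  refine ⟨insert r {p, q}, ⟨?_, ?_, ?_⟩, ?_⟩
  · intro a ha
    simp only [Finset.mem_insert, Finset.mem_singleton] at ha
    rcases ha with rfl | rfl | rfl
    · exact hrpts
    · exact hBpts hp
    · exact hBpts hq
  · rw [Finset.card_insert_of_notMem (by simp [hrp, hrq]),
      Finset.card_insert_of_notMem (by simp [hpq]), Finset.card_singleton]
  · intro B' hB'
    by_contra hcon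
    push_neg at hcon
    have hX3 : (insert r {p, q} : Finset α).card = 3 := by
      rw [Finset.card_insert_of_notMem (by simp [hrp, hrq]),
        Finset.card_insert_of_notMem (by simp [hpq]), Finset.card_singleton]
    have heq : B' ∩ insert r {p, q} = insert r {p, q} :=
      Finset.eq_of_subset_of_card_le Finset.inter_subset_right (by omega)
    have hsub : (insert r ({p, q} : Finset α)) ⊆ B' := by
      intro a ha; rw [← heq] at ha
      exact (Finset.mem_inter.mp ha).1
    have hpB' : p ∈ B' := hsub (by simp)
    have hqB' : q ∈ B' := hsub (by simp)
    have hrB' : r ∈ B' := hsub (by simp)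
    have hcount := D.pair_count p (hBpts hp) q (hBpts hq) hpq
    rw [hlam] at hcount
    have hBmem : B ∈ D.blocks.filter fun B => p ∈ B ∧ q ∈ B := by
      simp [Finset.mem_filter, hB, hp, hq]
    have hB'mem : B' ∈ D.blocks.filter fun B => p ∈ B ∧ q ∈ B := by
      simp [Finset.mem_filter, hB', hpB', hqB']
    have : B = B' := by
      have h1 := Finset.card_le_one.mp (le_of_eq hcount)
      exact h1 _ hBmem _ hB'mem
    exact hrB (this ▸ hrB')
  · rw [Finset.card_insert_of_notMem (by simp [hrp, hrq]),
      Finset.card_insert_of_notMem (by simp [hpq]), Finset.card_singleton]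

lemma sum_inter_card (n : ℕ) (D : TwoDesign α) (hU : D.IsUnital n)
    (K : Finset α) (hK : K ⊆ D.points) :
    ∑ B ∈ D.blocks, (B ∩ K).card = K.card * n ^ 2 := by
  have step : ∀ B : Finset α, (B ∩ K).card = ∑ p ∈ K, if p ∈ B then 1 else 0 := by
    intro B
    rw [← Finset.card_filter]
    congr 1
    ext a
    simp [Finset.mem_inter, Finset.mem_filter, and_comm]
  calc ∑ B ∈ D.blocks, (B ∩ K).card
      = ∑ B ∈ D.blocks, ∑ p ∈ K, if p ∈ B then 1 else 0 := by
        exact Finset.sum_congr rfl fun B _ => step B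
    _ = ∑ p ∈ K, ∑ B ∈ D.blocks, if p ∈ B then 1 else 0 := Finset.sum_comm
    _ = ∑ p ∈ K, (D.blocks.filter fun B => p ∈ B).card := by
        exact Finset.sum_congr rfl fun p _ => (Finset.card_filter _ _).symm
    _ = ∑ p ∈ K, n ^ 2 := Finset.sum_congr rfl fun p hp => by
        rw [D.point_count p (hK hp), hU.2.2.1]
    _ = K.card * n ^ 2 := by rw [Finset.sum_const, smul_eq_mul]

lemma nbhd_sec_bound (D : TwoDesign α) (K : Finset α) :
    (D.blockNbhd K).card + (D.blocks.filter fun B => 2 ≤ (B ∩ K).card).card ≤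
      ∑ B ∈ D.blocks, (B ∩ K).card := by
  rw [TwoDesign.blockNbhd, Finset.card_filter, Finset.card_filter, ← Finset.sum_add_distrib]
  refine Finset.sum_le_sum fun B _ => ?_
  split_ifs with h1 h2 h2
  · omega
  · obtain ⟨p, hpK, hpB⟩ := h1
    have : 0 < (B ∩ K).card :=
      Finset.card_pos.mpr ⟨p, Finset.mem_inter.mpr ⟨hpB, hpK⟩⟩
    omega
  · omega
  · omega

lemma sec_lower_bound (n : ℕ) (D : TwoDesign α) (hU : D.IsUnital n)
    (K : Finset α) (hK : K ⊆ D.points) (hArc : ∀ B ∈ D.blocks, (B ∩ K).card ≤ 2) :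
    K.card * K.card - K.card ≤
      2 * (D.blocks.filter fun B => 2 ≤ (B ∩ K).card).card := by
  have pair1 : ∀ pq ∈ K.offDiag,
      (D.blocks.filter fun B => pq.1 ∈ B ∧ pq.2 ∈ B).card = 1 := by
    rintro ⟨p, q⟩ hpq
    rw [Finset.mem_offDiag] at hpq
    rw [D.pair_count p (hK hpq.1) q (hK hpq.2.1) hpq.2.2, hU.2.2.2.2]
  have lhs : ∑ pq ∈ K.offDiag,
      (D.blocks.filter fun B => pq.1 ∈ B ∧ pq.2 ∈ B).card = K.card * K.card - K.card := by
    rw [Finset.sum_congr rfl pair1, Finset.sum_const, smul_eq_mul, mul_one,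
      Finset.offDiag_card]
  have swap : ∑ pq ∈ K.offDiag,
      (D.blocks.filter fun B => pq.1 ∈ B ∧ pq.2 ∈ B).card =
      ∑ B ∈ D.blocks, (K.offDiag.filter fun pq => pq.1 ∈ B ∧ pq.2 ∈ B).card := by
    simp_rw [Finset.card_filter]
    exact Finset.sum_comm
  have bound : ∀ B ∈ D.blocks,
      (K.offDiag.filter fun pq => pq.1 ∈ B ∧ pq.2 ∈ B).card ≤
        if 2 ≤ (B ∩ K).card then 2 else 0 := by
    intro B hB
    have heq : (K.offDiag.filter fun pq => pq.1 ∈ B ∧ pq.2 ∈ B) = (B ∩ K).offDiag := by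
      ext ⟨p, q⟩
      simp only [Finset.mem_filter, Finset.mem_offDiag, Finset.mem_inter]
      tauto
    rw [heq, Finset.offDiag_card]
    have := hArc B hB
    interval_cases h : (B ∩ K).card <;> simp
  have total : ∑ B ∈ D.blocks, (K.offDiag.filter fun pq => pq.1 ∈ B ∧ pq.2 ∈ B).card ≤
      2 * (D.blocks.filter fun B => 2 ≤ (B ∩ K).card).card := by
    calc ∑ B ∈ D.blocks, (K.offDiag.filter fun pq => pq.1 ∈ B ∧ pq.2 ∈ B).card
        ≤ ∑ B ∈ D.blocks, (if 2 ≤ (B ∩ K).card then 2 else 0) := Finset.sum_le_sum bound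
      _ = 2 * (D.blocks.filter fun B => 2 ≤ (B ∩ K).card).card := by
          rw [Finset.card_filter, Finset.mul_sum]
          exact Finset.sum_congr rfl fun B _ => by split_ifs <;> simp
  omega

set_option maxHeartbeats 1000000 in
theorem maxArc_dichotomy (n : ℕ) (hn : 2 ≤ n) (D : TwoDesign α) (hU : D.IsUnital n) :
    (⌊cFun n⌋ : ℤ) < (maxArc D : ℤ) ∨
      (maxArc D : ℝ) ≤ (n : ℝ) ^ 3 + 1 -
        (n : ℝ) ^ 2 * ((n : ℝ) ^ 2 + 1) / 2 * isoInc D := by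
  by_cases hcase : (⌊cFun n⌋ : ℤ) < (maxArc D : ℤ)
  · exact Or.inl hcase
  right
  push_neg at hcase
  obtain ⟨hv, hb, hr, hk, hlam⟩ := hU
  have hUU : D.IsUnital n := ⟨hv, hb, hr, hk, hlam⟩
  -- a maximum arc exists
  have hne : {k : ℕ | ∃ X : Finset α, D.IsArc X ∧ X.card = k}.Nonempty := by
    obtain ⟨X, hX, h3⟩ := exists_arc3 n hn D hUU
    exact ⟨3, X, hX, h3⟩
  obtain ⟨K, hKarc, hKcard⟩ := Nat.sSup_mem hne (arcSet_bddAbove D)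
  obtain ⟨hKpts, hK3, hKblocks⟩ := hKarc
  have hm3 : 3 ≤ K.card := hK3
  have hmv : K.card ≤ n ^ 3 + 1 := by
    have h := Finset.card_le_card hKpts
    rwa [D.card_points, hv] at h
  have hmc : (K.card : ℝ) ≤ cFun n := by
    have h1 : (K.card : ℤ) ≤ ⌊cFun n⌋ := hKcard ▸ hcase
    calc (K.card : ℝ) = ((K.card : ℤ) : ℝ) := by push_cast; ring
      _ ≤ (⌊cFun n⌋ : ℝ) := by exact_mod_cast h1
      _ ≤ cFun n := Int.floor_le _
  set T := D.blockNbhd K with hTdef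
  set sec := D.blocks.filter fun B => 2 ≤ (B ∩ K).card with hsecdef
  have h1 := sum_inter_card n D hUU K hKpts
  have h2 := nbhd_sec_bound D K
  have h3 := sec_lower_bound n D hUU K hKpts hKblocks
  -- key bound: 2*(T.card + K.card) ≤ n^4 + n^2
  have hTm2 : 2 * (T.card + K.card) ≤ n ^ 4 + n ^ 2 := by
    have hs0 : (0:ℝ) ≤ Real.sqrt (8 * (n:ℝ)^2 + 9) := Real.sqrt_nonneg _
    have hs2 : (Real.sqrt (8 * (n:ℝ)^2 + 9))^2 = 8*(n:ℝ)^2+9 :=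
      Real.sq_sqrt (by positivity)
    have hA : (T.card : ℝ) + (sec.card : ℝ) ≤ (K.card : ℝ) * (n:ℝ)^2 := by
      have := h2.trans h1.le
      exact_mod_cast this
    have hmm : K.card ≤ K.card * K.card := Nat.le_mul_of_pos_left _ (by omega)
    have hBr : (K.card:ℝ)*(K.card:ℝ) - (K.card:ℝ) ≤ 2*(sec.card:ℝ) := by
      have hc : ((K.card * K.card - K.card : ℕ) : ℝ)
          = (K.card:ℝ)*(K.card:ℝ) - (K.card:ℝ) := by
        push_cast [Nat.cast_sub hmm]; ring
      rw [← hc]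
      exact_mod_cast h3
    rw [cFun] at hmc
    have hfac1 : (0:ℝ) ≤ 2*(n:ℝ)^2 + 3 - 2*(K.card:ℝ) - Real.sqrt (8*(n:ℝ)^2+9) := by
      linarith
    have hfac2 : (0:ℝ) ≤ 2*(n:ℝ)^2 + 3 - 2*(K.card:ℝ) + Real.sqrt (8*(n:ℝ)^2+9) := by
      linarith
    have key : 2*(T.card:ℝ) + 2*(K.card:ℝ) ≤ (n:ℝ)^4 + (n:ℝ)^2 := by
      nlinarith [mul_nonneg hfac1 hfac2]
    have : ((2*(T.card+K.card) : ℕ):ℝ) ≤ ((n^4+n^2 : ℕ):ℝ) := by push_cast; linarith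
    exact_mod_cast this
  set Cn := n^2*(n^2+1)/2 with hCndef
  have h2C : 2 * Cn = n ^ 4 + n ^ 2 := by
    have heven : 2 ∣ n^2*(n^2+1) := (Nat.even_mul_succ_self (n^2)).two_dvd
    rw [hCndef, Nat.mul_div_cancel' heven]; ring
  have hTmC : T.card + K.card ≤ Cn := by omega
  have e3 : 2*n^3 ≤ n^4 := by
    calc 2*n^3 ≤ n*n^3 := Nat.mul_le_mul_right _ hn
      _ = n^4 := by ring
  have en2 : 4 ≤ n^2 := by
    calc 4 = 2^2 := by norm_num
      _ ≤ n^2 := Nat.pow_le_pow_left hn 2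
  have hCb : Cn - K.card ≤ D.blocks.card := by
    rw [D.card_blocks, hb]; omega
  obtain ⟨Y, hTY, hYb, hYcard⟩ :=
    Finset.exists_subsuperset_card_eq (Finset.filter_subset _ _ : T ⊆ D.blocks)
      (by omega : T.card ≤ Cn - K.card) hCb
  -- the point neighbourhood of Y minus K is everything outside K
  have hNpts : D.pointNbhd Y \ K = D.points \ K := by
    apply Finset.Subset.antisymm
    · exact Finset.sdiff_subset_sdiff (Finset.filter_subset _ _) (Finset.Subset.refl _)
    · intro q hq
      rw [Finset.mem_sdiff] at hq ⊢
      refine ⟨?_, hq.2⟩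
      rw [TwoDesign.pointNbhd, Finset.mem_filter]
      refine ⟨hq.1, ?_⟩
      by_contra hcon
      push_neg at hcon
      -- then insert q K would be a bigger arc
      have harc : D.IsArc (insert q K) := by
        refine ⟨Finset.insert_subset hq.1 hKpts, ?_, ?_⟩
        · rw [Finset.card_insert_of_notMem hq.2]; omega
        · intro B hB
          by_cases hqB : q ∈ B
          · by_cases hmeet : ∃ p ∈ K, p ∈ B
            · exfalso
              have hBT : B ∈ T := by
                rw [hTdef, TwoDesign.blockNbhd, Finset.mem_filter]
                exact ⟨hB, hmeet⟩
              exact hcon B (hTY hBT) hqB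
            · push_neg at hmeet
              have hsub : B ∩ insert q K ⊆ {q} := by
                intro a ha
                rw [Finset.mem_inter, Finset.mem_insert] at ha
                rcases ha.2 with rfl | haK
                · exact Finset.mem_singleton_self _
                · exact absurd ha.1 (hmeet a haK)
              calc (B ∩ insert q K).card ≤ ({q} : Finset α).card :=
                    Finset.card_le_card hsub
                _ ≤ 2 := by simp
          · have heq2 : B ∩ insert q K = B ∩ K := by
              ext a
              simp only [Finset.mem_inter, Finset.mem_insert]
              constructor
              · rintro ⟨haB, rfl | haK⟩
                · exact absurd haB hqB
                · exact ⟨haB, haK⟩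
              · rintro ⟨haB, haK⟩; exact ⟨haB, Or.inr haK⟩
            rw [heq2]; exact hKblocks B hB
      have hmem1 : K.card + 1 ∈ {k : ℕ | ∃ X : Finset α, D.IsArc X ∧ X.card = k} :=
        ⟨insert q K, harc, by rw [Finset.card_insert_of_notMem hq.2]⟩
      have hle : K.card + 1 ≤ maxArc D := le_csSup (arcSet_bddAbove D) hmem1
      have hKm : maxArc D = K.card := hKcard.symm
      omega
  have hBempty : D.blockNbhd K \ Y = ∅ := Finset.sdiff_eq_empty_iff_subset.mpr hTY
  -- membership in the isoperimetric set
  have hcards : K.card + Y.card = Cn := by omega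
  have hCpos : 0 < Cn := by omega
  set t0 : ℝ := (((D.pointNbhd Y \ K).card + (D.blockNbhd K \ Y).card : ℕ) : ℝ) /
      ((K.card + Y.card : ℕ) : ℝ) with ht0
  have hmem0 : t0 ∈ { t : ℝ | ∃ X ⊆ D.points, ∃ Y ⊆ D.blocks,
      0 < X.card + Y.card ∧ 2 * (X.card + Y.card) ≤ D.v + D.b ∧
      t = (((D.pointNbhd Y \ X).card + (D.blockNbhd X \ Y).card : ℕ) : ℝ) /
          ((X.card + Y.card : ℕ) : ℝ) } := by
    refine ⟨K, hKpts, Y, hYb, by omega, ?_, rfl⟩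
    rw [hv, hb, hcards]; omega
  have hbdd : BddBelow { t : ℝ | ∃ X ⊆ D.points, ∃ Y ⊆ D.blocks,
      0 < X.card + Y.card ∧ 2 * (X.card + Y.card) ≤ D.v + D.b ∧
      t = (((D.pointNbhd Y \ X).card + (D.blockNbhd X \ Y).card : ℕ) : ℝ) /
          ((X.card + Y.card : ℕ) : ℝ) } := by
    refine ⟨0, ?_⟩
    rintro t ⟨X, -, Y', -, -, -, rfl⟩
    positivity
  have hiso : isoInc D ≤ t0 := csInf_le hbdd hmem0
  -- compute t0
  have ht0val : t0 = ((n^3 + 1 - K.card : ℕ) : ℝ) / ((Cn : ℕ) : ℝ) := by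
    rw [ht0, hNpts, hBempty, Finset.card_empty, add_zero,
      Finset.card_sdiff_of_subset hKpts, D.card_points, hv, hcards]
  have hCr : (n:ℝ)^2 * ((n:ℝ)^2 + 1) / 2 = (Cn : ℝ) := by
    have h : 2 * ((Cn : ℕ) : ℝ) = (n:ℝ)^4 + (n:ℝ)^2 := by exact_mod_cast h2C
    have h' : (n:ℝ)^2*((n:ℝ)^2+1) = (n:ℝ)^4 + (n:ℝ)^2 := by ring
    linarith
  have hCposR : (0:ℝ) < (Cn : ℝ) := by exact_mod_cast hCpos
  have hfin : (Cn : ℝ) * isoInc D ≤ ((n^3 + 1 - K.card : ℕ) : ℝ) := by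
    have := mul_le_mul_of_nonneg_left hiso (le_of_lt hCposR)
    rw [ht0val] at this
    calc (Cn : ℝ) * isoInc D ≤ (Cn : ℝ) * (((n^3 + 1 - K.card : ℕ) : ℝ) / (Cn : ℝ)) := this
      _ = ((n^3 + 1 - K.card : ℕ) : ℝ) := by field_simp
  have hcast : ((n^3 + 1 - K.card : ℕ) : ℝ) = (n:ℝ)^3 + 1 - (K.card : ℝ) := by
    push_cast [Nat.cast_sub hmv]; ring
  rw [hcast] at hfin
  have hmax : maxArc D = K.card := hKcard.symm
  rw [hmax, hCr]
  linarith
end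

section
/- Let n ≥ 3 be an integer and define f(x,y) = (4x/(n+1)²)(n³+1) + (1 − 4x/(n+1)²)·n²(n+1)y/(n²(n−1)+y) − x for real x, y with y ≥ 0. Then for all real x, y with 0 ≤ x ≤ (n+1)²/4, 0 ≤ y ≤ (n⁴ − n³ + n²)/2 and x + y > 0, one has f(x,y)/(x+y) ≥ 2/n; moreover 2/n ≥ 2(n³ + 1 − ⌊c(n)⌋)/(n²(n² + 1)), where c(n) = n² − (√(8n² + 9) − 3)/2. -/
/-- `f(x,y) = (4x/(n+1)²)(n³+1) + (1 - 4x/(n+1)²)·n²(n+1)y/(n²(n-1)+y) - x`. -/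
noncomputable def fFun (n : ℕ) (x y : ℝ) : ℝ :=
  4 * x / ((n : ℝ) + 1) ^ 2 * ((n : ℝ) ^ 3 + 1) +
    (1 - 4 * x / ((n : ℝ) + 1) ^ 2) *
      ((n : ℝ) ^ 2 * ((n : ℝ) + 1) * y / ((n : ℝ) ^ 2 * ((n : ℝ) - 1) + y)) - x

open Set

theorem concaveOn_univ_quadratic (a b : ℝ) {d : ℝ} (hd : 0 ≤ d) :
    ConcaveOn ℝ univ fun t : ℝ => a + b * t - d * t ^ 2 := by
  refine ⟨convex_univ, fun s _ t _ p q hp hq hpq => ?_⟩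
  obtain rfl : q = 1 - p := by linarith
  simp only [smul_eq_mul]
  nlinarith [mul_nonneg (mul_nonneg hp hq) (mul_nonneg hd (sq_nonneg (s - t)))]

theorem nonneg_of_separately_concave_of_corners {g : ℝ → ℝ → ℝ} {x₀ x₁ y₀ y₁ x y : ℝ}
    (hgx : ∀ y ∈ Icc y₀ y₁, ConcaveOn ℝ (Icc x₀ x₁) (g · y))
    (hgy : ∀ x ∈ ({x₀, x₁} : Set ℝ), ConcaveOn ℝ (Icc y₀ y₁) (g x))
    (h₀₀ : 0 ≤ g x₀ y₀) (h₀₁ : 0 ≤ g x₀ y₁) (h₁₀ : 0 ≤ g x₁ y₀) (h₁₁ : 0 ≤ g x₁ y₁)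
    (hx : x ∈ Icc x₀ x₁) (hy : y ∈ Icc y₀ y₁) : 0 ≤ g x y := by
  have hx₀ : x₀ ∈ Icc x₀ x₁ := left_mem_Icc.2 (hx.1.trans hx.2)
  have hx₁ : x₁ ∈ Icc x₀ x₁ := right_mem_Icc.2 (hx.1.trans hx.2)
  have hy₀ : y₀ ∈ Icc y₀ y₁ := left_mem_Icc.2 (hy.1.trans hy.2)
  have hy₁ : y₁ ∈ Icc y₀ y₁ := right_mem_Icc.2 (hy.1.trans hy.2)
  have left : 0 ≤ g x₀ y :=
    (le_min h₀₀ h₀₁).trans ((hgy x₀ (by simp)).min_le_of_mem_Icc hy₀ hy₁ hy)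
  have right : 0 ≤ g x₁ y :=
    (le_min h₁₀ h₁₁).trans ((hgy x₁ (by simp)).min_le_of_mem_Icc hy₀ hy₁ hy)
  exact (le_min left right).trans ((hgx y hy).min_le_of_mem_Icc hx₀ hx₁ hx)

def fGap (N x y : ℝ) : ℝ :=
  N ^ 2 * (N - 1) * (4 * N ^ 4 - N ^ 3 - 4 * N ^ 2 - N - 2) * x
    + N ^ 2 * (N + 1) ^ 2 * (N ^ 2 - N + 2) * y
    - (5 * N ^ 3 + 4 * N ^ 2 + N + 2) * x * y - 2 * (N + 1) ^ 2 * y ^ 2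

theorem fFun_mul_sub_eq (n : ℕ) (x y : ℝ) (hD : (n : ℝ) ^ 2 * ((n : ℝ) - 1) + y ≠ 0) :
    fFun n x y * n - 2 * (x + y) =
      fGap n x y / (((n : ℝ) + 1) ^ 2 * ((n : ℝ) ^ 2 * ((n : ℝ) - 1) + y)) := by
  rw [eq_div_iff (by positivity)]
  unfold fFun fGap
  field_simp
  ring

theorem concaveOn_fGap_fst (N y : ℝ) : ConcaveOn ℝ univ (fGap N · y) := by
  convert concaveOn_univ_quadratic
    (N ^ 2 * (N + 1) ^ 2 * (N ^ 2 - N + 2) * y - 2 * (N + 1) ^ 2 * y ^ 2)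
    (N ^ 2 * (N - 1) * (4 * N ^ 4 - N ^ 3 - 4 * N ^ 2 - N - 2)
      - (5 * N ^ 3 + 4 * N ^ 2 + N + 2) * y) le_rfl using 1
  funext x
  unfold fGap
  ring

theorem concaveOn_fGap_snd (N x : ℝ) : ConcaveOn ℝ univ (fGap N x) := by
  convert concaveOn_univ_quadratic
    (N ^ 2 * (N - 1) * (4 * N ^ 4 - N ^ 3 - 4 * N ^ 2 - N - 2) * x)
    (N ^ 2 * (N + 1) ^ 2 * (N ^ 2 - N + 2) - (5 * N ^ 3 + 4 * N ^ 2 + N + 2) * x)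
    (by positivity : 0 ≤ 2 * (N + 1) ^ 2) using 1
  funext y
  unfold fGap
  ring

theorem fGap_nonneg {N x y : ℝ} (hN : 3 ≤ N) (hx : x ∈ Icc 0 ((N + 1) ^ 2 / 4))
    (hy : y ∈ Icc 0 ((N ^ 4 - N ^ 3 + N ^ 2) / 2)) : 0 ≤ fGap N x y := by
  obtain ⟨m, hm, rfl⟩ : ∃ m : ℝ, 0 ≤ m ∧ N = m + 3 := ⟨N - 3, by linarith, by ring⟩
  refine nonneg_of_separately_concave_of_corners
    (fun y _ => (concaveOn_fGap_fst _ y).subset (subset_univ _) (convex_Icc _ _))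
    (fun x _ => (concaveOn_fGap_snd _ x).subset (subset_univ _) (convex_Icc _ _))
    ?_ ?_ ?_ ?_ hx hy
  · simp [fGap]
  · unfold fGap; ring_nf; positivity
  · unfold fGap; ring_nf; positivity
  · unfold fGap; ring_nf; positivity

theorem cFun_nonneg (n : ℕ) : 0 ≤ cFun n := by
  have hsqrt : Real.sqrt (8 * (n : ℝ) ^ 2 + 9) ≤ 2 * (n : ℝ) ^ 2 + 3 :=
    Real.sqrt_le_iff.2 ⟨by positivity, by nlinarith [sq_nonneg ((n : ℝ) ^ 2)]⟩
  unfold cFun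
  linarith

theorem f_lower_bound_case_one (n : ℕ) (hn : 3 ≤ n) :
    (∀ x y : ℝ, 0 ≤ x → x ≤ ((n : ℝ) + 1) ^ 2 / 4 → 0 ≤ y →
      y ≤ ((n : ℝ) ^ 4 - (n : ℝ) ^ 3 + (n : ℝ) ^ 2) / 2 → 0 < x + y →
      fFun n x y / (x + y) ≥ 2 / (n : ℝ)) ∧
    2 / (n : ℝ) ≥ 2 * ((n : ℝ) ^ 3 + 1 - (⌊cFun n⌋ : ℝ)) /
      ((n : ℝ) ^ 2 * ((n : ℝ) ^ 2 + 1)) := by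
  have hN : (3 : ℝ) ≤ n := by exact_mod_cast hn
  refine ⟨fun x y hx₀ hx₁ hy₀ hy₁ hxy => ?_, ?_⟩
  · have hD : 0 < (n : ℝ) ^ 2 * ((n : ℝ) - 1) + y := by
      have : 0 < (n : ℝ) - 1 := by linarith
      positivity
    have hgap : 0 ≤ fFun n x y * n - 2 * (x + y) := by
      rw [fFun_mul_sub_eq n x y hD.ne']
      exact div_nonneg (fGap_nonneg hN ⟨hx₀, hx₁⟩ ⟨hy₀, hy₁⟩) (by positivity)
    rw [ge_iff_le, div_le_div_iff₀ (by positivity) hxy]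
    linarith
  · have hfloor : (0 : ℝ) ≤ ⌊cFun n⌋ := by exact_mod_cast Int.floor_nonneg.2 (cFun_nonneg n)
    rw [ge_iff_le, div_le_div_iff₀ (by positivity) (by positivity)]
    nlinarith
end
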